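/- For each i ∈ {1,…,2m} and j ∈ {1,…,n}, there exists a partition I_↓(i,j) of the set g_↓ ∩ T_ij into pairwise disjoint intervals such that: there is at most one interval int ∈ I_↓(i,j) on which r_↓(u,j) = u for all (u,j) ∈ int; the pointer r_↓ is constant on every other interval of I_↓(i,j); and |I_↓(i,j)| ≤ 2n + 1. -/

import Mathlib

open Set

noncomputable section

/-- The piecewise linear closed curve through the vertices `x 0, x 1, …`:
`f(i+α) = (1-α) • x i + α • x (i+1)`. -/
def fCurve {k : ℕ} (x : ℕ → EuclideanSpace ℝ (Fin k)) (t : ℝ) :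
    EuclideanSpace ℝ (Fin k) :=
  (1 - Int.fract t) • x (⌊t⌋.toNat) + Int.fract t • x (⌊t⌋.toNat + 1)

/-- The extension of the curve from `[0,m]` to `[0,2m]` by `f(u) = f(u-m)` for `u > m`. -/
def fCurveExt {k : ℕ} (m : ℕ) (x : ℕ → EuclideanSpace ℝ (Fin k)) (u : ℝ) :
    EuclideanSpace ℝ (Fin k) :=
  if u ≤ m then fCurve x u else fCurve x (u - m)

/-- The rectangle `D = [0,2m] × [0,n]`. -/
def Dfull (m n : ℕ) : Set (ℝ × ℝ) :=
  Icc (0:ℝ) (2*(m:ℝ)) ×ˢ Icc (0:ℝ) (n:ℝ)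

/-- The free space `D_ε = {(u,v) ∈ D : dist (f_X u) (f_Y v) ≤ ε}`. -/
def Dfree {k : ℕ} (m n : ℕ) (x y : ℕ → EuclideanSpace ℝ (Fin k)) (ε : ℝ) :
    Set (ℝ × ℝ) :=
  {p ∈ Dfull m n | dist (fCurveExt m x p.1) (fCurve y p.2) ≤ ε}

/-- The top side `T = [0,2m] × {n}` of `D`. -/
def Tside (m n : ℕ) : Set (ℝ × ℝ) := Icc (0:ℝ) (2*(m:ℝ)) ×ˢ {(n:ℝ)}

/-- The bottom side `B = [0,2m] × {0}` of `D`. -/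
def Bside (m : ℕ) : Set (ℝ × ℝ) := Icc (0:ℝ) (2*(m:ℝ)) ×ˢ {(0:ℝ)}

/-- A monotone (non-decreasing) path: a connected subset `γ ⊆ Dε` with
`(u-u')·(v-v') ≥ 0` for all `(u,v), (u',v') ∈ γ`. -/
def IsMonPath (Dε γ : Set (ℝ × ℝ)) : Prop :=
  γ ⊆ Dε ∧ IsConnected γ ∧
    ∀ p ∈ γ, ∀ q ∈ γ, (p.1 - q.1) * (p.2 - q.2) ≥ 0

/-- Two points are mutually reachable if some monotone path contains both. -/
def Reach (Dε : Set (ℝ × ℝ)) (p q : ℝ × ℝ) : Prop :=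
  ∃ γ : Set (ℝ × ℝ), IsMonPath Dε γ ∧ p ∈ γ ∧ q ∈ γ

/-- `g↓`: the points of `Dε` mutually reachable with at least one point of `B`. -/
def gDown (m : ℕ) (Dε : Set (ℝ × ℝ)) : Set (ℝ × ℝ) :=
  {p ∈ Dε | ∃ q ∈ Bside m, Reach Dε p q}

/-- `g↑`: the points of `Dε` mutually reachable with at least one point of `T`. -/
def gUp (m n : ℕ) (Dε : Set (ℝ × ℝ)) : Set (ℝ × ℝ) :=
  {p ∈ Dε | ∃ q ∈ Tside m n, Reach Dε p q}

/-- The pointer `r↑(p)`: the maximum `u* ∈ [0,2m]` such that `p` and `(u*, n)`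
are mutually reachable. -/
def rUp (m n : ℕ) (Dε : Set (ℝ × ℝ)) (p : ℝ × ℝ) : ℝ :=
  sSup {u : ℝ | u ∈ Icc (0:ℝ) (2*(m:ℝ)) ∧ Reach Dε p (u, (n:ℝ))}

/-- The pointer `r↓(p)`: for `p` with `p.2 > 0`, the maximum `u* ∈ [0,2m]` such
that `p` and `(u*, 0)` are mutually reachable; on the bottom side `r↓(u,0) = u`. -/
def rDown (m : ℕ) (Dε : Set (ℝ × ℝ)) (p : ℝ × ℝ) : ℝ :=
  if p.2 = 0 then p.1
  else sSup {u : ℝ | u ∈ Icc (0:ℝ) (2*(m:ℝ)) ∧ Reach Dε p (u, (0:ℝ))}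

/-- The cell `D_ij = [i-1,i] × [j-1,j]`. -/
def cellD (i j : ℕ) : Set (ℝ × ℝ) :=
  Icc ((i:ℝ)-1) (i:ℝ) ×ˢ Icc ((j:ℝ)-1) (j:ℝ)

/-- The top side `T_ij` of the cell `D_ij`. -/
def cellT (i j : ℕ) : Set (ℝ × ℝ) := Icc ((i:ℝ)-1) (i:ℝ) ×ˢ {(j:ℝ)}

/-- The bottom side `B_ij` of the cell `D_ij`. -/
def cellB (i j : ℕ) : Set (ℝ × ℝ) := Icc ((i:ℝ)-1) (i:ℝ) ×ˢ {((j:ℝ)-1)}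

/-- The right side `R_ij` of the cell `D_ij`. -/
def cellR (i j : ℕ) : Set (ℝ × ℝ) := {(i:ℝ)} ×ˢ Icc ((j:ℝ)-1) (j:ℝ)

/-- The left side `L_ij` of the cell `D_ij`. -/
def cellL (i j : ℕ) : Set (ℝ × ℝ) := {((i:ℝ)-1)} ×ˢ Icc ((j:ℝ)-1) (j:ℝ)

/-- The partial order `≼` on `D`: `(u1,v1) ≼ (u2,v2)` iff `u1 ≤ u2` and `v1 ≥ v2`. -/
def prec (p q : ℝ × ℝ) : Prop := p.1 ≤ q.1 ∧ q.2 ≤ p.2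

/-!
Within the column `i` the free space is convex in every cell. The points `u` of `T_ij` whose
whole column `{u} × [0, j]` is free form one interval, on which `r↓(u, j) = u`. For the other
points, let `σ(u)` be the set of rows `l < j` that the free space meets in `[i-1, u] × {l}`; it
grows with `u`, so its cardinality cuts them into at most `j + 1` intervals. If `u' ≤ u''` have
the same `σ` and no free column lies in `(u', u'']`, a monotone path from `(u'', j)` down to
`(w, 0)` has `w ≤ u'` and crosses the column of `u'`; every row it meets to the right of `u'` is
also met to its left, so by convexity that column is free above the crossing and the path can be
rerouted to start at `(u', j)`. Thus `u'` and `u''` reach the same bottom points and share `r↓`.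

Monotone paths are handled as connected chains for the product order on `ℝ × ℝ`, which makes
cutting a path to an order interval and concatenating two paths straightforward.
-/

section MonotonePath

variable {F γ : Set (ℝ × ℝ)} {p q r : ℝ × ℝ}

lemma mul_sub_nonneg_iff_le_or_le :
    0 ≤ (p.1 - q.1) * (p.2 - q.2) ↔ p ≤ q ∨ q ≤ p := by
  simp only [Prod.le_def, mul_nonneg_iff, sub_nonneg]
  constructor
  · rintro (⟨h1, h2⟩ | ⟨h1, h2⟩)
    · exact Or.inr ⟨h1, h2⟩
    · exact Or.inl ⟨by linarith, by linarith⟩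
  · rintro (⟨h1, h2⟩ | ⟨h1, h2⟩)
    · exact Or.inr ⟨by linarith, by linarith⟩
    · exact Or.inl ⟨h1, h2⟩

lemma isMonPath_iff : IsMonPath F γ ↔ γ ⊆ F ∧ IsConnected γ ∧ IsChain (· ≤ ·) γ := by
  refine and_congr_right fun _ => and_congr_right fun _ => ?_
  refine ⟨fun h p hp q hq _ => mul_sub_nonneg_iff_le_or_le.mp (h p hp q hq), fun h p hp q hq => ?_⟩
  exact mul_sub_nonneg_iff_le_or_le.mpr (h.total hp hq)

lemma IsMonPath.inter_Icc (hγ : IsMonPath F γ) (hp : p ∈ γ) (hq : q ∈ γ) (hpq : p ≤ q) :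
    IsMonPath F (γ ∩ Icc p q) := by
  rw [isMonPath_iff] at hγ ⊢
  obtain ⟨hsub, hconn, hchain⟩ := hγ
  refine ⟨inter_subset_left.trans hsub, ?_, hchain.mono inter_subset_left⟩
  -- the clamp `r ↦ (r ⊔ p) ⊓ q` retracts the chain `γ` onto `γ ∩ Icc p q`
  have hclamp : γ ∩ Icc p q = (fun r => (r ⊔ p) ⊓ q) '' γ := by
    ext r
    constructor
    · rintro ⟨hr, hpr, hrq⟩
      exact ⟨r, hr, by dsimp only; rw [sup_eq_left.mpr hpr, inf_eq_left.mpr hrq]⟩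
    · rintro ⟨r, hr, rfl⟩
      dsimp only
      rcases hchain.total hr hp with hrp | hpr
      · rw [sup_eq_right.mpr hrp, inf_eq_left.mpr hpq]
        exact ⟨hp, le_rfl, hpq⟩
      rcases hchain.total hr hq with hrq | hqr
      · rw [sup_eq_left.mpr hpr, inf_eq_left.mpr hrq]
        exact ⟨hr, hpr, hrq⟩
      · rw [sup_eq_left.mpr hpr, inf_eq_right.mpr hqr]
        exact ⟨hq, hpq, le_rfl⟩
  have hcont : Continuous fun r : ℝ × ℝ => (r ⊔ p) ⊓ q :=
    (show Continuous fun r : ℝ × ℝ => (min (max r.1 p.1) q.1, min (max r.2 p.2) q.2) by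
      fun_prop)
  rw [hclamp]
  exact hconn.image _ hcont.continuousOn

lemma IsMonPath.exists_fst_eq (hγ : IsMonPath F γ) (hp : p ∈ γ) (hq : q ∈ γ) {t : ℝ}
    (ht : t ∈ Icc p.1 q.1) : ∃ r ∈ γ, r.1 = t :=
  hγ.2.1.isPreconnected.intermediate_value hp hq continuous_fst.continuousOn ht

lemma IsMonPath.exists_snd_eq (hγ : IsMonPath F γ) (hp : p ∈ γ) (hq : q ∈ γ) {t : ℝ}
    (ht : t ∈ Icc p.2 q.2) : ∃ r ∈ γ, r.2 = t :=
  hγ.2.1.isPreconnected.intermediate_value hp hq continuous_snd.continuousOn ht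

lemma isMonPath_segment (hpq : p ≤ q) (h : segment ℝ p q ⊆ F) :
    IsMonPath F (segment ℝ p q) := by
  refine isMonPath_iff.mpr
    ⟨h, ⟨⟨p, left_mem_segment ℝ p q⟩, (convex_segment p q).isPreconnected⟩, ?_⟩
  rw [segment_eq_image']
  rintro _ ⟨s, -, rfl⟩ _ ⟨t, -, rfl⟩ -
  have hqp : 0 ≤ q - p := sub_nonneg.mpr hpq
  rcases le_total s t with hst | hts
  · exact Or.inl (add_le_add_right (smul_le_smul_of_nonneg_right hst hqp) p)
  · exact Or.inr (add_le_add_right (smul_le_smul_of_nonneg_right hts hqp) p)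

lemma Reach.symm (h : Reach F p q) : Reach F q p :=
  let ⟨γ, hγ, hp, hq⟩ := h
  ⟨γ, hγ, hq, hp⟩

lemma Reach.le_or_le (h : Reach F p q) : p ≤ q ∨ q ≤ p :=
  let ⟨_, hγ, hp, hq⟩ := h
  mul_sub_nonneg_iff_le_or_le.mp (hγ.2.2 p hp q hq)

lemma Reach.exists_subset_Icc (h : Reach F p q) (hpq : p ≤ q) :
    ∃ γ, IsMonPath F γ ∧ p ∈ γ ∧ q ∈ γ ∧ γ ⊆ Icc p q :=
  let ⟨γ, hγ, hp, hq⟩ := h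
  ⟨γ ∩ Icc p q, hγ.inter_Icc hp hq hpq, ⟨hp, le_rfl, hpq⟩, ⟨hq, hpq, le_rfl⟩, inter_subset_right⟩

lemma Reach.trans (h₁ : Reach F p q) (h₂ : Reach F q r) (hpq : p ≤ q) (hqr : q ≤ r) :
    Reach F p r := by
  obtain ⟨γ₁, hγ₁, hp, hq₁, hγ₁pq⟩ := h₁.exists_subset_Icc hpq
  obtain ⟨γ₂, hγ₂, hq₂, hr, hγ₂qr⟩ := h₂.exists_subset_Icc hqr
  rw [isMonPath_iff] at hγ₁ hγ₂
  refine ⟨γ₁ ∪ γ₂, isMonPath_iff.mpr ⟨union_subset hγ₁.1 hγ₂.1,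
    hγ₁.2.1.union ⟨q, hq₁, hq₂⟩ hγ₂.2.1, ?_⟩, Or.inl hp, Or.inr hr⟩
  rintro a (ha | ha) b (hb | hb) hab
  · exact hγ₁.2.2 ha hb hab
  · exact Or.inl ((hγ₁pq ha).2.trans (hγ₂qr hb).1)
  · exact Or.inr ((hγ₁pq hb).2.trans (hγ₂qr ha).1)
  · exact hγ₂.2.2 ha hb hab

lemma reach_of_forall_mem_horizontal {a b v : ℝ} (hab : a ≤ b) (h : ∀ s ∈ Icc a b, (s, v) ∈ F) :
    Reach F (a, v) (b, v) := by
  have hseg : segment ℝ (a, v) (b, v) = (fun s => (s, v)) '' Icc a b := by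
    rw [← Prod.image_mk_segment_left, segment_eq_Icc hab]
  refine ⟨_, isMonPath_segment (Prod.mk_le_mk.mpr ⟨hab, le_rfl⟩) ?_,
    left_mem_segment ℝ _ _, right_mem_segment ℝ _ _⟩
  rw [hseg]
  rintro _ ⟨s, hs, rfl⟩
  exact h s hs

lemma reach_of_forall_mem_vertical {u a b : ℝ} (hab : a ≤ b) (h : ∀ t ∈ Icc a b, (u, t) ∈ F) :
    Reach F (u, a) (u, b) := by
  have hseg : segment ℝ (u, a) (u, b) = (fun t => (u, t)) '' Icc a b := by
    rw [← Prod.image_mk_segment_right, segment_eq_Icc hab]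
  refine ⟨_, isMonPath_segment (Prod.mk_le_mk.mpr ⟨le_rfl, hab⟩) ?_,
    left_mem_segment ℝ _ _, right_mem_segment ℝ _ _⟩
  rw [hseg]
  rintro _ ⟨t, ht, rfl⟩
  exact h t ht

lemma Reach.forall_mem_vertical {u a b : ℝ} (h : Reach F (u, a) (u, b)) (hab : a ≤ b) :
    ∀ t ∈ Icc a b, (u, t) ∈ F := by
  intro t ht
  obtain ⟨γ, hγ, hp, hq, hγpq⟩ := h.exists_subset_Icc (Prod.mk_le_mk.mpr ⟨le_rfl, hab⟩)
  obtain ⟨r, hr, hrt⟩ := hγ.exists_snd_eq hp hq ht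
  have hru : r.1 = u := le_antisymm (hγpq hr).2.1 (hγpq hr).1.1
  exact hγ.1 (by rwa [← hru, ← hrt])

end MonotonePath

section Curve

variable {k : ℕ} (x : ℕ → EuclideanSpace ℝ (Fin k))

lemma fCurve_natCast (c : ℕ) : fCurve x c = x c := by
  simp [fCurve]

lemma fCurve_eq_add_smul (c : ℕ) {t : ℝ} (ht : t ∈ Icc (c:ℝ) (c + 1)) :
    fCurve x t = x c + (t - c) • (x (c + 1) - x c) := by
  rcases eq_or_lt_of_le ht.2 with rfl | hlt
  · have := fCurve_natCast x (c + 1)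
    push_cast at this
    rw [this]
    simp
  · have hfloor : ⌊t⌋ = c := Int.floor_eq_iff.mpr ⟨by exact_mod_cast ht.1, by exact_mod_cast hlt⟩
    have hfract : Int.fract t = t - c := by rw [Int.fract, hfloor]; push_cast; ring
    simp only [fCurve, hfloor, hfract, Int.toNat_natCast]
    module

lemma exists_fCurve_eq_add_smul (c : ℕ) :
    ∃ P V : EuclideanSpace ℝ (Fin k), ∀ t ∈ Icc (c:ℝ) (c + 1), fCurve x t = P + t • V :=
  ⟨x c - (c:ℝ) • (x (c + 1) - x c), x (c + 1) - x c, fun t ht => by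
    rw [fCurve_eq_add_smul x c ht]; module⟩

variable {m : ℕ} {x}

lemma fCurveExt_eq_of_le (hx : x m = x 0) {t : ℝ} (ht : (m:ℝ) ≤ t) :
    fCurveExt m x t = fCurve x (t - m) := by
  rw [fCurveExt]
  split_ifs with htm
  · obtain rfl : t = m := le_antisymm htm ht
    have h0 : fCurve x 0 = x 0 := by simpa using fCurve_natCast x 0
    rw [sub_self, fCurve_natCast, hx, h0]
  · rfl

lemma exists_fCurveExt_eq_add_smul (hx : x m = x 0) (c : ℕ) :
    ∃ P V : EuclideanSpace ℝ (Fin k), ∀ t ∈ Icc (c:ℝ) (c + 1), fCurveExt m x t = P + t • V := by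
  by_cases hcm : c < m
  · obtain ⟨P, V, h⟩ := exists_fCurve_eq_add_smul x c
    refine ⟨P, V, fun t ht => ?_⟩
    have htm : t ≤ m := ht.2.trans (by exact_mod_cast hcm)
    rw [fCurveExt, if_pos htm, h t ht]
  · push Not at hcm
    obtain ⟨P, V, h⟩ := exists_fCurve_eq_add_smul x (c - m)
    refine ⟨P - (m:ℝ) • V, V, fun t ht => ?_⟩
    have hcast : ((c - m : ℕ) : ℝ) = c - m := by push_cast [Nat.cast_sub hcm]; ring
    have htm : (m:ℝ) ≤ t := le_trans (by exact_mod_cast hcm) ht.1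
    rw [fCurveExt_eq_of_le hx htm, h (t - m) ⟨by linarith [ht.1], by linarith [ht.2]⟩]
    module

end Curve

lemma convex_setOf_dist_add_smul_le {E : Type*} [NormedAddCommGroup E] [NormedSpace ℝ E]
    (P V R W : E) (ε : ℝ) : Convex ℝ {p : ℝ × ℝ | dist (P + p.1 • V) (R + p.2 • W) ≤ ε} := by
  let L : ℝ × ℝ →ₗ[ℝ] E := (LinearMap.fst ℝ ℝ ℝ).smulRight V - (LinearMap.snd ℝ ℝ ℝ).smulRight W
  have hL : {p : ℝ × ℝ | dist (P + p.1 • V) (R + p.2 • W) ≤ ε} =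
      L ⁻¹' Metric.closedBall (R - P) ε := by
    ext p
    simp only [mem_preimage, Metric.mem_closedBall, dist_eq_norm, L, LinearMap.sub_apply,
      LinearMap.smulRight_apply, LinearMap.fst_apply, LinearMap.snd_apply]
    rw [mem_ofPred_eq]
    congr! 2
    abel
  rw [hL]
  exact (convex_closedBall _ _).linear_preimage L

lemma convex_Dfree_inter_cellD {k m n : ℕ} {x : ℕ → EuclideanSpace ℝ (Fin k)}
    (y : ℕ → EuclideanSpace ℝ (Fin k)) (ε : ℝ) (hx : x m = x 0) {i l : ℕ}
    (hi : 1 ≤ i) (hl : 1 ≤ l) :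
    Convex ℝ (Dfree m n x y ε ∩ cellD i l) := by
  obtain ⟨c, rfl⟩ : ∃ c, i = c + 1 := ⟨i - 1, by omega⟩
  obtain ⟨d, rfl⟩ : ∃ d, l = d + 1 := ⟨l - 1, by omega⟩
  obtain ⟨P, V, hPV⟩ := exists_fCurveExt_eq_add_smul hx c
  obtain ⟨R, W, hRW⟩ := exists_fCurve_eq_add_smul y d
  have hcell : cellD (c + 1) (d + 1) = Icc (c:ℝ) (c + 1) ×ˢ Icc (d:ℝ) (d + 1) := by
    simp [cellD]
  have hset : Dfree m n x y ε ∩ cellD (c + 1) (d + 1) = Dfull m n ∩ cellD (c + 1) (d + 1) ∩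
      {p : ℝ × ℝ | dist (P + p.1 • V) (R + p.2 • W) ≤ ε} := by
    ext p
    simp only [Dfree, mem_inter_iff, hcell, mem_prod]
    constructor
    · rintro ⟨⟨hD, hd⟩, h1, h2⟩
      exact ⟨⟨hD, h1, h2⟩, show dist _ _ ≤ ε by rwa [← hPV _ h1, ← hRW _ h2]⟩
    · rintro ⟨⟨hD, h1, h2⟩, hd⟩
      exact ⟨⟨hD, by rwa [hPV _ h1, hRW _ h2]⟩, h1, h2⟩
  rw [hset]
  exact (((convex_Icc _ _).prod (convex_Icc _ _)).inter (hcell ▸ (convex_Icc _ _).prod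
    (convex_Icc _ _))).inter (convex_setOf_dist_add_smul_le P V R W ε)

lemma exists_mem_Icc_natCast_sub_one {v : ℝ} {j : ℕ} (hv : v ∈ Icc (0:ℝ) j) (hj : 1 ≤ j) :
    ∃ l : ℕ, 1 ≤ l ∧ l ≤ j ∧ v ∈ Icc ((l:ℝ) - 1) l := by
  refine ⟨max 1 ⌈v⌉₊, le_max_left _ _, max_le hj (Nat.ceil_le.mpr hv.2), ?_, ?_⟩
  · rcases le_total ⌈v⌉₊ 1 with h | h
    · rw [max_eq_left h]; norm_num [hv.1]
    · rw [max_eq_right h]; linarith [Nat.ceil_lt_add_one hv.1]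
  · exact (Nat.le_ceil v).trans (by exact_mod_cast le_max_right _ _)

lemma Icc_subset_of_natCast_mem {A : Set ℝ} {j : ℕ} {h : ℝ}
    (hA : ∀ l : ℕ, 1 ≤ l → l ≤ j → (A ∩ Icc ((l:ℝ) - 1) l).OrdConnected)
    (h0 : 0 ≤ h) (hh : h ∈ A) (hint : ∀ l : ℕ, h ≤ l → l ≤ j → (l:ℝ) ∈ A) :
    Icc h j ⊆ A := by
  rintro v ⟨hhv, hvj⟩
  rcases eq_or_lt_of_le hhv with rfl | hlt
  · exact hh
  have hj : 0 < j := Nat.cast_pos.mp ((h0.trans_lt hlt).trans_le hvj)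
  obtain ⟨l, hl1, hlj, hlv, hvl⟩ := exists_mem_Icc_natCast_sub_one ⟨h0.trans hhv, hvj⟩ hj
  have hcast : ((l - 1 : ℕ) : ℝ) = l - 1 := by push_cast [Nat.cast_sub hl1]; ring
  have ha : max h ((l:ℝ) - 1) ∈ A ∩ Icc ((l:ℝ) - 1) l := by
    refine ⟨?_, le_max_right _ _, max_le (hhv.trans hvl) (by linarith)⟩
    rcases le_total h ((l:ℝ) - 1) with hle | hle
    · rw [max_eq_right hle, ← hcast]
      exact hint (l - 1) (hcast ▸ hle) (by omega)
    · rwa [max_eq_left hle]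
  have hb : (l:ℝ) ∈ A ∩ Icc ((l:ℝ) - 1) l := ⟨hint l (hhv.trans hvl) hlj, by linarith, le_rfl⟩
  exact ((hA l hl1 hlj).out ha hb ⟨max_le hhv hlv, hvl⟩).1

section CellColumn

def CellConvex (F : Set (ℝ × ℝ)) (i j : ℕ) : Prop :=
  ∀ l, 1 ≤ l → l ≤ j → Convex ℝ (F ∩ cellD i l)

variable {F : Set (ℝ × ℝ)} {i j : ℕ}

lemma mem_of_mem_row (hF : CellConvex F i j) (hj : 1 ≤ j)
    {a b c v : ℝ} (hv : v ∈ Icc (0:ℝ) j) (ha : (a, v) ∈ F) (hb : (b, v) ∈ F)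
    (hia : (i:ℝ) - 1 ≤ a) (hbi : b ≤ i) (hc : c ∈ Icc a b) : (c, v) ∈ F := by
  obtain ⟨l, hl1, hlj, hlv⟩ := exists_mem_Icc_natCast_sub_one hv hj
  have hseg : (c, v) ∈ segment ℝ (a, v) (b, v) := by
    rw [← Prod.image_mk_segment_left, segment_eq_Icc (hc.1.trans hc.2)]
    exact mem_image_of_mem _ hc
  exact ((hF l hl1 hlj).segment_subset ⟨ha, ⟨hia, hc.1.trans (hc.2.trans hbi)⟩, hlv⟩
    ⟨hb, ⟨hia.trans (hc.1.trans hc.2), hbi⟩, hlv⟩ hseg).1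

lemma forall_mem_column (hF : CellConvex F i j)
    {u h : ℝ} (hu : u ∈ Icc ((i:ℝ) - 1) i) (h0 : 0 ≤ h) (hh : (u, h) ∈ F)
    (hint : ∀ l : ℕ, h ≤ l → l ≤ j → (u, (l:ℝ)) ∈ F) : ∀ v ∈ Icc h j, (u, v) ∈ F := by
  refine Icc_subset_of_natCast_mem (A := {v | (u, v) ∈ F}) (fun l hl1 hlj => ?_) h0 hh hint
  refine ordConnected_iff.mpr fun a ha b hb hab c hc => ⟨?_, ha.2.1.trans hc.1, hc.2.trans hb.2.2⟩
  have hseg : (u, c) ∈ segment ℝ (u, a) (u, b) := by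
    rw [← Prod.image_mk_segment_right, segment_eq_Icc hab]
    exact mem_image_of_mem _ hc
  exact ((hF l hl1 hlj).segment_subset ⟨ha.1, hu, ha.2⟩ ⟨hb.1, hu, hb.2⟩ hseg).1

variable (F i j) in
open Classical in
def rowsReached (u : ℝ) : Finset ℕ :=
  (Finset.range j).filter fun l => ∃ s ∈ Icc ((i:ℝ) - 1) u, (s, (l:ℝ)) ∈ F

lemma mem_rowsReached {u : ℝ} {l : ℕ} :
    l ∈ rowsReached F i j u ↔ l < j ∧ ∃ s ∈ Icc ((i:ℝ) - 1) u, (s, (l:ℝ)) ∈ F := by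
  simp [rowsReached]

lemma rowsReached_mono : Monotone (rowsReached F i j) := by
  intro u u' huu' l hl
  obtain ⟨hlj, s, hs, hsF⟩ := mem_rowsReached.mp hl
  exact mem_rowsReached.mpr ⟨hlj, s, ⟨hs.1, hs.2.trans huu'⟩, hsF⟩

lemma card_rowsReached_le (u : ℝ) : (rowsReached F i j u).card ≤ j :=
  (Finset.card_le_card fun _ hl => Finset.mem_range.mpr (mem_rowsReached.mp hl).1).trans
    (Finset.card_range j).le

lemma mem_of_mem_rowsReached (hF : CellConvex F i j)
    {u t : ℝ} {l : ℕ} (hl : l ∈ rowsReached F i j u) (ht : (t, (l:ℝ)) ∈ F) (hut : u ≤ t)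
    (hti : t ≤ i) : (u, (l:ℝ)) ∈ F := by
  obtain ⟨hlj, s, hs, hsF⟩ := mem_rowsReached.mp hl
  exact mem_of_mem_row hF (by omega) ⟨Nat.cast_nonneg l, by exact_mod_cast hlj.le⟩ hsF ht hs.1
    hti ⟨hs.2, hut⟩

end CellColumn

section TopSide

variable {m : ℕ} {F : Set (ℝ × ℝ)} {i j : ℕ}

variable (m F i j) in
def topTrace : Set ℝ := {u : ℝ | (u, (j:ℝ)) ∈ gDown m F ∩ cellT i j}

variable (m F i j) in
def diagTrace : Set ℝ := {u ∈ topTrace m F i j | ∀ v ∈ Icc (0:ℝ) j, (u, v) ∈ F}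

variable (m F j) in
def bottomReach (u : ℝ) : Set ℝ :=
  {w : ℝ | w ∈ Icc (0:ℝ) (2 * (m:ℝ)) ∧ Reach F (u, (j:ℝ)) (w, (0:ℝ))}

lemma mem_topTrace {u : ℝ} : u ∈ topTrace m F i j ↔
    u ∈ Icc ((i:ℝ) - 1) i ∧ (u, (j:ℝ)) ∈ F ∧ ∃ w ∈ Icc (0:ℝ) (2 * m), Reach F (u, j) (w, 0) := by
  simp only [topTrace, gDown, Bside, cellT, mem_ofPred_eq, mem_inter_iff, mem_prod,
    mem_singleton_iff, and_true]
  constructor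
  · rintro ⟨⟨hF, ⟨w, _⟩, ⟨hw, rfl⟩, hreach⟩, hu⟩
    exact ⟨hu, hF, w, hw, hreach⟩
  · rintro ⟨hu, hF, w, hw, hreach⟩
    exact ⟨⟨hF, (w, 0), ⟨hw, rfl⟩, hreach⟩, hu⟩

lemma rDown_eq_sSup_bottomReach (hj : j ≠ 0) (u : ℝ) :
    rDown m F (u, j) = sSup (bottomReach m F j u) :=
  if_neg (Nat.cast_ne_zero.mpr hj)

lemma le_of_reach_bottom {u v w : ℝ} (hv : 0 < v) (h : Reach F (u, v) (w, 0)) :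
    (w, 0) ≤ (u, v) :=
  h.le_or_le.resolve_left fun h' => hv.not_ge h'.2

variable {u₁ u₂ w : ℝ}

lemma reach_bottom_of_mem_Icc (hF : CellConvex F i j) (hj : 1 ≤ j)
    (h₁ : u₁ ∈ topTrace m F i j) (h₂ : u₂ ∈ topTrace m F i j) {c : ℝ}
    (hc : c ∈ Icc u₁ u₂) (h : Reach F (u₁, j) (w, 0)) : Reach F (c, j) (w, 0) := by
  obtain ⟨hu₁, hu₁F, -⟩ := mem_topTrace.mp h₁
  obtain ⟨hu₂, hu₂F, -⟩ := mem_topTrace.mp h₂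
  have hjpos : (0:ℝ) < j := by exact_mod_cast hj
  have hrow : ∀ s ∈ Icc u₁ c, (s, (j:ℝ)) ∈ F := fun s hs =>
    mem_of_mem_row hF hj ⟨hjpos.le, le_rfl⟩ hu₁F hu₂F hu₁.1 hu₂.2 ⟨hs.1, hs.2.trans hc.2⟩
  exact (h.symm.trans (reach_of_forall_mem_horizontal hc.1 hrow)
    (le_of_reach_bottom hjpos h) (Prod.mk_le_mk.mpr ⟨hc.1, le_rfl⟩)).symm

lemma topTrace_ordConnected (hF : CellConvex F i j) (hj : 1 ≤ j) :
    (topTrace m F i j).OrdConnected := by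
  refine ordConnected_iff.mpr fun u₁ h₁ u₂ h₂ _ c hc => ?_
  obtain ⟨hu₁, hu₁F, w, hw, hreach⟩ := mem_topTrace.mp h₁
  obtain ⟨hu₂, hu₂F, -⟩ := mem_topTrace.mp h₂
  refine mem_topTrace.mpr ⟨⟨hu₁.1.trans hc.1, hc.2.trans hu₂.2⟩, ?_, w, hw,
    reach_bottom_of_mem_Icc hF hj h₁ h₂ hc hreach⟩
  exact mem_of_mem_row hF hj ⟨Nat.cast_nonneg j, le_rfl⟩ hu₁F hu₂F hu₁.1 hu₂.2 hc

lemma bottomReach_mono (hF : CellConvex F i j) (hj : 1 ≤ j)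
    (h₁ : u₁ ∈ topTrace m F i j) (h₂ : u₂ ∈ topTrace m F i j) (hle : u₁ ≤ u₂) :
    bottomReach m F j u₁ ⊆ bottomReach m F j u₂ := fun _ ⟨hw, hreach⟩ =>
  ⟨hw, reach_bottom_of_mem_Icc hF hj h₁ h₂ ⟨hle, le_rfl⟩ hreach⟩

lemma reach_bottom_of_rowsReached_subset (hF : CellConvex F i j)
    {u b : ℝ} (h : Reach F (u, j) (w, 0)) (hu : u ≤ i) (hb : b ∈ Icc w u)
    (hib : (i:ℝ) - 1 ≤ b) (hbF : (b, (j:ℝ)) ∈ F)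
    (hrows : rowsReached F i j u ⊆ rowsReached F i j b) : Reach F (b, j) (w, 0) := by
  obtain ⟨γ, hγ, hwγ, huγ, hγsub⟩ :=
    h.symm.exists_subset_Icc (Prod.mk_le_mk.mpr ⟨hb.1.trans hb.2, Nat.cast_nonneg j⟩)
  obtain ⟨⟨b', h₀⟩, hzγ, hb'⟩ := hγ.exists_fst_eq hwγ huγ hb
  obtain rfl : b = b' := hb'.symm
  have hz : ((w, 0) : ℝ × ℝ) ≤ (b, h₀) ∧ ((b, h₀) : ℝ × ℝ) ≤ (u, (j:ℝ)) := hγsub hzγ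
  have hint : ∀ l : ℕ, h₀ ≤ l → l ≤ j → (b, (l:ℝ)) ∈ F := by
    intro l hl hlj
    rcases eq_or_lt_of_le hlj with rfl | hlj
    · exact hbF
    obtain ⟨⟨t, _⟩, hrγ, rfl⟩ :=
      hγ.exists_snd_eq hwγ huγ ⟨Nat.cast_nonneg l, (by exact_mod_cast hlj.le : (l:ℝ) ≤ j)⟩
    have hr : ((w, 0) : ℝ × ℝ) ≤ (t, (l:ℝ)) ∧ ((t, (l:ℝ)) : ℝ × ℝ) ≤ (u, (j:ℝ)) := hγsub hrγ
    rcases (isMonPath_iff.mp hγ).2.2.total hrγ hzγ with hrz | hzr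
    · obtain rfl : (l:ℝ) = h₀ := le_antisymm hrz.2 hl
      exact hγ.1 hzγ
    · have hl : l ∈ rowsReached F i j u :=
        mem_rowsReached.mpr ⟨hlj, t, ⟨hib.trans hzr.1, hr.2.1⟩, hγ.1 hrγ⟩
      exact mem_of_mem_rowsReached hF (hrows hl) (hγ.1 hrγ) hzr.1 (hr.2.1.trans hu)
  have hcol := forall_mem_column hF ⟨hib, hb.2.trans hu⟩ hz.1.2 (hγ.1 hzγ) hint
  have hwz : Reach F (w, 0) (b, h₀) := ⟨γ, hγ, hwγ, hzγ⟩
  exact (hwz.trans (reach_of_forall_mem_vertical hz.2.2 hcol) hz.1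
    (Prod.mk_le_mk.mpr ⟨le_rfl, hz.2.2⟩)).symm

lemma bottomReach_subset_of_rowsReached_subset (hF : CellConvex F i j) (hj : 1 ≤ j)
    (h₁ : u₁ ∈ topTrace m F i j) (h₂ : u₂ ∈ topTrace m F i j) (hle : u₁ ≤ u₂)
    (hrows : rowsReached F i j u₂ ⊆ rowsReached F i j u₁)
    (hdiag : ∀ v ∈ diagTrace m F i j, v ∉ Ioc u₁ u₂) :
    bottomReach m F j u₂ ⊆ bottomReach m F j u₁ := by
  rintro w ⟨hw, hreach⟩
  obtain ⟨hu₁, hu₁F, -⟩ := mem_topTrace.mp h₁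
  obtain ⟨hu₂, hu₂F, -⟩ := mem_topTrace.mp h₂
  have hjpos : (0:ℝ) < j := by exact_mod_cast hj
  have hwu₂ : w ≤ u₂ := (le_of_reach_bottom hjpos hreach).1
  refine ⟨hw, ?_⟩
  rcases le_or_gt w u₁ with hwu₁ | hu₁w
  · exact reach_bottom_of_rowsReached_subset hF hreach hu₂.2 ⟨hwu₁, hle⟩ hu₁.1 hu₁F hrows
  -- otherwise the column of `w` is free, which puts `w` on the diagonal part
  have hwF : (w, (j:ℝ)) ∈ F :=
    mem_of_mem_row hF hj ⟨hjpos.le, le_rfl⟩ hu₁F hu₂F hu₁.1 hu₂.2 ⟨hu₁w.le, hwu₂⟩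
  have hww := reach_bottom_of_rowsReached_subset hF hreach hu₂.2 ⟨le_rfl, hwu₂⟩
    (hu₁.1.trans hu₁w.le) hwF (hrows.trans (rowsReached_mono hu₁w.le))
  have hwS : w ∈ topTrace m F i j :=
    mem_topTrace.mpr ⟨⟨hu₁.1.trans hu₁w.le, hwu₂.trans hu₂.2⟩, hwF, w, hw, hww⟩
  exact absurd ⟨hu₁w, hwu₂⟩ (hdiag w ⟨hwS, hww.symm.forall_mem_vertical hjpos.le⟩)

lemma mem_diagTrace_of_le (hF : CellConvex F i j) {u v : ℝ}
    (hu : u ∈ topTrace m F i j) (hv : v ∈ diagTrace m F i j) (hle : u ≤ v)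
    (hrows : rowsReached F i j v ⊆ rowsReached F i j u) : u ∈ diagTrace m F i j := by
  obtain ⟨hui, huF, -⟩ := mem_topTrace.mp hu
  obtain ⟨hvi, -, -⟩ := mem_topTrace.mp hv.1
  have hint : ∀ l : ℕ, (0:ℝ) ≤ l → l ≤ j → (u, (l:ℝ)) ∈ F := by
    intro l _ hlj
    rcases eq_or_lt_of_le hlj with rfl | hlj
    · exact huF
    have hvl : (v, (l:ℝ)) ∈ F := hv.2 l ⟨Nat.cast_nonneg l, by exact_mod_cast hlj.le⟩
    have hl : l ∈ rowsReached F i j v := mem_rowsReached.mpr ⟨hlj, v, ⟨hvi.1, le_rfl⟩, hvl⟩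
    exact mem_of_mem_rowsReached hF (hrows hl) hvl hle hvi.2
  have hu0 : (u, (0:ℝ)) ∈ F := by exact_mod_cast hint 0 (Nat.cast_nonneg 0) (Nat.zero_le j)
  exact ⟨hu, forall_mem_column hF hui le_rfl hu0 hint⟩

lemma diagTrace_ordConnected (hF : CellConvex F i j) (hj : 1 ≤ j) :
    (diagTrace m F i j).OrdConnected := by
  refine ordConnected_iff.mpr fun u₁ h₁ u₂ h₂ _ c hc =>
    ⟨(topTrace_ordConnected hF hj).out h₁.1 h₂.1 hc, fun v hv => ?_⟩
  exact mem_of_mem_row hF hj hv (h₁.2 v hv) (h₂.2 v hv) (mem_topTrace.mp h₁.1).1.1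
    (mem_topTrace.mp h₂.1).1.2 hc

lemma rDown_eq_self_of_mem_diagTrace (hi₁ : 1 ≤ i) (hi₂ : i ≤ 2 * m) (hj : 1 ≤ j) {u : ℝ}
    (hu : u ∈ diagTrace m F i j) : rDown m F (u, j) = u := by
  obtain ⟨hui, -, -⟩ := mem_topTrace.mp hu.1
  have hi₁' : (1:ℝ) ≤ i := by exact_mod_cast hi₁
  have hi₂' : (i:ℝ) ≤ 2 * m := by exact_mod_cast hi₂
  have hjpos : (0:ℝ) < j := by exact_mod_cast hj
  rw [rDown_eq_sSup_bottomReach (by omega)]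
  refine IsGreatest.csSup_eq ⟨⟨⟨by linarith [hui.1], by linarith [hui.2]⟩,
    (reach_of_forall_mem_vertical hjpos.le hu.2).symm⟩, fun w hw => ?_⟩
  exact (le_of_reach_bottom hjpos hw.2).1

variable (m F i j) in
def rowClass (c : ℕ) : Set ℝ :=
  {u ∈ topTrace m F i j | u ∉ diagTrace m F i j ∧ (rowsReached F i j u).card = c}

lemma rowsReached_eq_of_mem_rowClass {c : ℕ} {a b : ℝ} (ha : a ∈ rowClass m F i j c)
    (hb : b ∈ rowClass m F i j c) (hab : a ≤ b) : rowsReached F i j a = rowsReached F i j b :=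
  Finset.eq_of_subset_of_card_le (rowsReached_mono hab) (by rw [ha.2.2, hb.2.2])

lemma rowClass_ordConnected (hF : CellConvex F i j) (hj : 1 ≤ j) (c : ℕ) :
    (rowClass m F i j c).OrdConnected := by
  refine ordConnected_iff.mpr fun u₁ h₁ u₂ h₂ hle z hz => ?_
  have hrows : rowsReached F i j z = rowsReached F i j u₁ :=
    ((rowsReached_mono hz.2).trans (rowsReached_eq_of_mem_rowClass h₁ h₂ hle).ge).antisymm
      (rowsReached_mono hz.1)
  refine ⟨(topTrace_ordConnected hF hj).out h₁.1 h₂.1 hz, fun hzd => ?_, by rw [hrows, h₁.2.2]⟩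
  exact h₁.2.1 (mem_diagTrace_of_le hF h₁.1 hzd hz.1 hrows.le)

lemma rDown_eq_of_mem_rowClass (hF : CellConvex F i j) (hj : 1 ≤ j) {c : ℕ} {a b : ℝ}
    (ha : a ∈ rowClass m F i j c) (hb : b ∈ rowClass m F i j c) :
    rDown m F (a, j) = rDown m F (b, j) := by
  wlog hab : a ≤ b generalizing a b
  · exact (this hb ha (le_of_not_ge hab)).symm
  have hrows := rowsReached_eq_of_mem_rowClass ha hb hab
  have hdiag : ∀ v ∈ diagTrace m F i j, v ∉ Ioc a b := fun v hv hvab =>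
    ha.2.1 (mem_diagTrace_of_le hF ha.1 hv hvab.1.le (hrows ▸ rowsReached_mono hvab.2))
  rw [rDown_eq_sSup_bottomReach (by omega), rDown_eq_sSup_bottomReach (by omega),
    (bottomReach_mono hF hj ha.1 hb.1 hab).antisymm
      (bottomReach_subset_of_rowsReached_subset hF hj ha.1 hb.1 hab hrows.ge hdiag)]

end TopSide

section Partition

variable {m : ℕ} {F : Set (ℝ × ℝ)} {i j : ℕ}

variable (m F i j) in
open Classical in
def topPartition : Finset (Set ℝ) :=
  insert (diagTrace m F i j) ((Finset.range (j + 1)).image (rowClass m F i j))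

lemma mem_topPartition {s : Set ℝ} :
    s ∈ topPartition m F i j ↔ s = diagTrace m F i j ∨ ∃ c ≤ j, rowClass m F i j c = s := by
  simp [topPartition]

lemma ordConnected_of_mem_topPartition (hF : CellConvex F i j) (hj : 1 ≤ j) {s : Set ℝ}
    (hs : s ∈ topPartition m F i j) : s.OrdConnected := by
  obtain rfl | ⟨c, -, rfl⟩ := mem_topPartition.mp hs
  · exact diagTrace_ordConnected hF hj
  · exact rowClass_ordConnected hF hj c

lemma exists_forall_rDown_eq_of_mem_topPartition (hF : CellConvex F i j) (hj : 1 ≤ j)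
    {s : Set ℝ} (hs : s ∈ topPartition m F i j) (hsd : s ≠ diagTrace m F i j) :
    ∃ r : ℝ, ∀ u ∈ s, rDown m F (u, j) = r := by
  obtain rfl | ⟨c, -, rfl⟩ := mem_topPartition.mp hs
  · exact absurd rfl hsd
  rcases (rowClass m F i j c).eq_empty_or_nonempty with h | ⟨u₀, hu₀⟩
  · exact ⟨0, by simp [h]⟩
  · exact ⟨rDown m F (u₀, j), fun u hu => rDown_eq_of_mem_rowClass hF hj hu hu₀⟩

lemma pairwiseDisjoint_topPartition :
    (topPartition m F i j : Set (Set ℝ)).PairwiseDisjoint id := by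
  have hdiag (c : ℕ) : Disjoint (diagTrace m F i j) (rowClass m F i j c) :=
    disjoint_left.mpr fun _ hd hc => hc.2.1 hd
  intro s hs t ht hst
  obtain rfl | ⟨c, -, rfl⟩ := mem_topPartition.mp hs <;>
    obtain rfl | ⟨c', -, rfl⟩ := mem_topPartition.mp ht
  · exact absurd rfl hst
  · exact hdiag c'
  · exact (hdiag c).symm
  · refine disjoint_left.mpr fun u hu hu' => hst ?_
    rw [← hu.2.2, ← hu'.2.2]

lemma sUnion_topPartition : ⋃₀ (topPartition m F i j : Set (Set ℝ)) = topTrace m F i j := by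
  ext u
  simp only [mem_sUnion, Finset.mem_coe, mem_topPartition]
  constructor
  · rintro ⟨_, rfl | ⟨c, -, rfl⟩, hu⟩
    exacts [hu.1, hu.1]
  · intro hu
    by_cases hud : u ∈ diagTrace m F i j
    · exact ⟨_, Or.inl rfl, hud⟩
    · exact ⟨_, Or.inr ⟨_, card_rowsReached_le u, rfl⟩, hu, hud, rfl⟩

lemma card_topPartition_le : (topPartition m F i j).card ≤ j + 2 :=
  (Finset.card_insert_le _ _).trans
    (Nat.add_le_add_right (Finset.card_image_le.trans (Finset.card_range _).le) 1)

end Partition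

theorem stmt18_general
    (k m n : ℕ)
    (x y : ℕ → EuclideanSpace ℝ (Fin k)) (hx : x m = x 0)
    (ε : ℝ)
    (Dε : Set (ℝ × ℝ)) (hDε : Dε = Dfree m n x y ε)
    (i j : ℕ) (hi1 : 1 ≤ i) (hi2 : i ≤ 2*m) (hj1 : 1 ≤ j) (hj2 : j ≤ n) :
    ∃ I : Finset (Set ℝ),
      (∀ s ∈ I, s.OrdConnected) ∧
      (I : Set (Set ℝ)).PairwiseDisjoint id ∧
      ⋃₀ (I : Set (Set ℝ)) = {u : ℝ | (u, (j:ℝ)) ∈ gDown m Dε ∩ cellT i j} ∧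
      (∃ I' ⊆ I, I'.card ≤ 1 ∧
        (∀ s ∈ I', ∀ u ∈ s, rDown m Dε (u, (j:ℝ)) = u) ∧
        (∀ s ∈ I, s ∉ I' → ∃ c : ℝ, ∀ u ∈ s, rDown m Dε (u, (j:ℝ)) = c)) ∧
      I.card ≤ 2*n + 1 := by
  have hF : CellConvex Dε i j := fun l hl _ =>
    hDε ▸ convex_Dfree_inter_cellD y ε hx hi1 hl
  refine ⟨topPartition m Dε i j, fun s => ordConnected_of_mem_topPartition hF hj1,
    pairwiseDisjoint_topPartition, sUnion_topPartition, ⟨{diagTrace m Dε i j}, ?_, ?_, ?_, ?_⟩,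
    card_topPartition_le.trans (by omega)⟩
  · exact Finset.singleton_subset_iff.mpr (mem_topPartition.mpr (Or.inl rfl))
  · exact (Finset.card_singleton _).le
  · intro s hs u hu
    rw [Finset.mem_singleton.mp hs] at hu
    exact rDown_eq_self_of_mem_diagTrace hi1 hi2 hj1 hu
  · exact fun s hs hsd =>
      exists_forall_rDown_eq_of_mem_topPartition hF hj1 hs (Finset.mem_singleton.not.mp hsd)

theorem stmt18
    (k m n : ℕ) (hk : 1 ≤ k) (hm : 1 ≤ m) (hn : 1 ≤ n)
    (x y : ℕ → EuclideanSpace ℝ (Fin k)) (hx : x m = x 0) (hy : y n = y 0)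
    (ε : ℝ) (hε : 0 ≤ ε)
    (Dε : Set (ℝ × ℝ)) (hDε : Dε = Dfree m n x y ε)
    (i j : ℕ) (hi1 : 1 ≤ i) (hi2 : i ≤ 2*m) (hj1 : 1 ≤ j) (hj2 : j ≤ n) :
    ∃ I : Finset (Set ℝ),
      (∀ s ∈ I, s.OrdConnected) ∧
      (I : Set (Set ℝ)).PairwiseDisjoint id ∧
      ⋃₀ (I : Set (Set ℝ)) = {u : ℝ | (u, (j:ℝ)) ∈ gDown m Dε ∩ cellT i j} ∧
      (∃ I' ⊆ I, I'.card ≤ 1 ∧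
        (∀ s ∈ I', ∀ u ∈ s, rDown m Dε (u, (j:ℝ)) = u) ∧
        (∀ s ∈ I, s ∉ I' → ∃ c : ℝ, ∀ u ∈ s, rDown m Dε (u, (j:ℝ)) = c)) ∧
      I.card ≤ 2*n + 1 :=
  stmt18_general k m n x y hx ε Dε hDε i j hi1 hi2 hj1 hj2
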